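/- arXiv:2505.14278 — 6 statements merged into one kernel-verified Lean document; each statement's English description precedes it below -/
import Mathlib

section
/- For every λ > 0, the pair (Φ,Ψ) given by Φ(s) = 2⁵(s^{3/2} + 3λ^{-2}s)/(s^{1/2}+λ^{-2})³ and Ψ(s) = 8s/(s^{1/2}+λ^{-2}) satisfies, for all s > 0: 16 s^{3/2} Φ''(s) + 4 Φ'(s) Ψ(s) = 0 and 16 s^{3/2} Ψ''(s) + Φ(s) = 0. -/
/-! In the variable `u = √s` the profiles become rational functions,
`Φ = 2⁵ (u³ + 3a u²) / (u + a)³` and `Ψ = 8u² / (u + a)` with `a = λ⁻²`. Since `ds = 2u du`,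
every `s`-derivative is a `u`-derivative divided by `2u`; this gives
`Φ' = 96a² / (u + a)⁴`, `Φ'' = -192a² / (u (u + a)⁵)`, `Ψ' = (4u + 8a) / (u + a)²`,
`Ψ'' = -(2u + 6a) / (u (u + a)³)`, and both equations reduce to identities of rational functions. -/

open Real Filter Topology

lemma rpow_three_halves_eq_sqrt_pow {s : ℝ} (hs : 0 ≤ s) : s ^ ((3 : ℝ) / 2) = √s ^ 3 := by
  rw [sqrt_eq_rpow, ← rpow_mul_natCast hs]
  norm_num

lemma deriv_eq_of_eq_comp_sqrt {f F G : ℝ → ℝ} (hf : ∀ x > 0, f x = F √x)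
    (hF : ∀ u > 0, HasDerivAt F (2 * u * G u) u) {x : ℝ} (hx : 0 < x) :
    deriv f x = G √x := by
  have hu : 0 < √x := sqrt_pos.mpr hx
  have hfF : f =ᶠ[𝓝 x] fun y => F √y :=
    eventually_of_mem (Ioi_mem_nhds hx) fun y hy => hf y hy
  rw [hfF.deriv_eq]
  exact ((hF √x hu).comp x (hasDerivAt_sqrt hx.ne')).deriv.trans (by field_simp)

lemma deriv_deriv_eq_of_eq_comp_sqrt {f F G H : ℝ → ℝ} (hf : ∀ x > 0, f x = F √x)
    (hF : ∀ u > 0, HasDerivAt F (2 * u * G u) u) (hG : ∀ u > 0, HasDerivAt G (2 * u * H u) u)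
    {x : ℝ} (hx : 0 < x) :
    deriv (deriv f) x = H √x :=
  deriv_eq_of_eq_comp_sqrt (fun _ hy => deriv_eq_of_eq_comp_sqrt hf hF hy) hG hx

section RationalProfiles

variable {a u : ℝ}

lemma hasDerivAt_phi_profile (h : u + a ≠ 0) :
    HasDerivAt (fun u => 2 ^ 5 * (u ^ 3 + 3 * a * u ^ 2) / (u + a) ^ 3)
      (2 * u * (96 * a ^ 2 / (u + a) ^ 4)) u := by
  have hnum : HasDerivAt (fun u => 2 ^ 5 * (u ^ 3 + 3 * a * u ^ 2))
      (2 ^ 5 * (3 * u ^ 2 + 3 * a * (2 * u))) u := by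
    simpa using (((hasDerivAt_pow 3 u).add ((hasDerivAt_pow 2 u).const_mul (3 * a))).const_mul
      (2 ^ 5 : ℝ))
  have hden : HasDerivAt (fun u => (u + a) ^ 3) (3 * (u + a) ^ 2) u := by
    simpa using ((hasDerivAt_id u).add_const a).fun_pow 3
  refine (hnum.fun_div hden (pow_ne_zero 3 h)).congr_deriv ?_
  field_simp
  ring

lemma hasDerivAt_phi_deriv_profile (hu : u ≠ 0) (h : u + a ≠ 0) :
    HasDerivAt (fun u => 96 * a ^ 2 / (u + a) ^ 4)
      (2 * u * (-192 * a ^ 2 / (u * (u + a) ^ 5))) u := by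
  have hden : HasDerivAt (fun u => (u + a) ^ 4) (4 * (u + a) ^ 3) u := by
    simpa using ((hasDerivAt_id u).add_const a).fun_pow 4
  refine ((hasDerivAt_const u (96 * a ^ 2)).fun_div hden (pow_ne_zero 4 h)).congr_deriv ?_
  field_simp
  ring

lemma hasDerivAt_psi_profile (h : u + a ≠ 0) :
    HasDerivAt (fun u => 8 * u ^ 2 / (u + a)) (2 * u * ((4 * u + 8 * a) / (u + a) ^ 2)) u := by
  have hnum : HasDerivAt (fun u => 8 * u ^ 2) (8 * (2 * u)) u := by
    simpa using (hasDerivAt_pow 2 u).const_mul (8 : ℝ)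
  refine (hnum.fun_div ((hasDerivAt_id' u).add_const a) h).congr_deriv ?_
  field_simp
  ring

lemma hasDerivAt_psi_deriv_profile (hu : u ≠ 0) (h : u + a ≠ 0) :
    HasDerivAt (fun u => (4 * u + 8 * a) / (u + a) ^ 2)
      (2 * u * (-(2 * u + 6 * a) / (u * (u + a) ^ 3))) u := by
  have hnum : HasDerivAt (fun u => 4 * u + 8 * a) 4 u := by
    simpa using ((hasDerivAt_id u).const_mul (4 : ℝ)).add_const (8 * a)
  have hden : HasDerivAt (fun u => (u + a) ^ 2) (2 * (u + a)) u := by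
    simpa using ((hasDerivAt_id u).add_const a).fun_pow 2
  refine (hnum.fun_div hden (pow_ne_zero 2 h)).congr_deriv ?_
  field_simp
  ring

end RationalProfiles

theorem stmt_5 (lam : ℝ) (hlam : 0 < lam) :
    let Φ : ℝ → ℝ := fun s => 2^5 * (s ^ ((3:ℝ)/2) + 3*lam^(-(2:ℝ))*s) / (s ^ ((1:ℝ)/2) + lam^(-(2:ℝ)))^3
    let Ψ : ℝ → ℝ := fun s => 8*s / (s ^ ((1:ℝ)/2) + lam^(-(2:ℝ)))
    ∀ s : ℝ, 0 < s →
      16 * s ^ ((3:ℝ)/2) * deriv (deriv Φ) s + 4 * deriv Φ s * Ψ s = 0 ∧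
      16 * s ^ ((3:ℝ)/2) * deriv (deriv Ψ) s + Φ s = 0 := by
  intro Φ Ψ s hs
  set a := lam ^ (-(2:ℝ))
  have ha : 0 < a := rpow_pos_of_pos hlam _
  have hpos : ∀ u > 0, u + a ≠ 0 := fun u hu => by positivity
  have hΦ : ∀ x > 0, Φ x = 2 ^ 5 * (√x ^ 3 + 3 * a * √x ^ 2) / (√x + a) ^ 3 := fun x hx => by
    simp only [Φ, rpow_three_halves_eq_sqrt_pow hx.le, ← sqrt_eq_rpow, sq_sqrt hx.le]
    rfl
  have hΨ : ∀ x > 0, Ψ x = 8 * √x ^ 2 / (√x + a) := fun x hx => by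
    simp only [Ψ, ← sqrt_eq_rpow, sq_sqrt hx.le]
    rfl
  have hΦ' := deriv_eq_of_eq_comp_sqrt hΦ (fun u hu => hasDerivAt_phi_profile (hpos u hu)) hs
  have hΦ'' := deriv_deriv_eq_of_eq_comp_sqrt hΦ (fun u hu => hasDerivAt_phi_profile (hpos u hu))
    (fun u hu => hasDerivAt_phi_deriv_profile hu.ne' (hpos u hu)) hs
  have hΨ'' := deriv_deriv_eq_of_eq_comp_sqrt hΨ (fun u hu => hasDerivAt_psi_profile (hpos u hu))
    (fun u hu => hasDerivAt_psi_deriv_profile hu.ne' (hpos u hu)) hs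
  have hu : 0 < √s := sqrt_pos.mpr hs
  rw [hΦ', hΦ'', hΨ'', hΦ s hs, hΨ s hs, rpow_three_halves_eq_sqrt_pow hs.le]
  constructor <;> field_simp <;> ring
end

section
/- Let ε ∈ (0,1), ℓ ∈ (0,1), m > 0 satisfy (3ℓ + mε/π)² ≤ 32ℓ. With τ(t) = ε − ℓt, a(t) = 4e^{τ(t)}, and u̲(ρ,t) = a(t)ρ/(ρ+τ(t)³), the inequality u̲_t − 4ρ u̲_{ρρ} − 2u̲_ρ (u̲ − mρ/(2π)) ≤ 0 holds for all ρ ∈ (0,1) and t ∈ (0,ε/ℓ). -/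
/-!
Write `τ = ε - ℓ t`, `a = 4 e^τ` and `W = ρ + τ³`. A direct computation gives
`Θ u̲ = (a ρ / W³) (-ℓ W² + 3ℓ τ² W + 8τ³ - 2a τ³ + m τ³ W / π)`.
Since `a ≥ 4(1 + τ)` and `0 < τ ≤ ε`, the bracket is at most
`-8τ⁴ + (3ℓ + mε/π) τ² W - ℓ W²`, a quadratic form in `(τ², W)` whose discriminant `(3ℓ + mε/π)² - 32ℓ` is nonpositive.
-/

open Real

theorem quadratic_form_nonpos_of_discrim_nonpos {K : Type*} [Field K] [LinearOrder K]
    [IsStrictOrderedRing K] {a b c : K} (ha : a < 0) (h : discrim a b c ≤ 0) (x y : K) :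
    a * (x * x) + b * x * y + c * (y * y) ≤ 0 := by
  have key : 4 * a * (a * (x * x) + b * x * y + c * (y * y))
      = (2 * a * x + b * y) ^ 2 - discrim a b c * (y * y) := by
    rw [discrim]; ring
  have hnonneg : 0 ≤ 4 * a * (a * (x * x) + b * x * y + c * (y * y)) := by
    rw [key]
    nlinarith [sq_nonneg (2 * a * x + b * y), mul_nonneg (neg_nonneg.2 h) (mul_self_nonneg y)]
  exact nonpos_of_mul_nonneg_right hnonneg (by linarith)

theorem hasDerivAt_mul_div_add_const (c s x : ℝ) (hx : x + s ≠ 0) :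
    HasDerivAt (fun y => c * y / (y + s)) (c * s / (x + s) ^ 2) x := by
  refine (((hasDerivAt_id' x).const_mul c).fun_div ((hasDerivAt_id' x).add_const s) hx)
    |>.congr_deriv ?_
  ring

theorem deriv_deriv_mul_div_add_const (c s x : ℝ) (hx : x + s ≠ 0) :
    deriv (deriv fun y => c * y / (y + s)) x = -2 * c * s / (x + s) ^ 3 := by
  have hnear : ∀ᶠ y in nhds x, y + s ≠ 0 :=
    (continuous_id.add continuous_const).continuousAt.eventually_ne hx
  have hderiv : deriv (fun y => c * y / (y + s)) =ᶠ[nhds x] fun y => c * s / (y + s) ^ 2 :=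
    hnear.mono fun y hy => (hasDerivAt_mul_div_add_const c s y hy).deriv
  rw [hderiv.deriv_eq]
  have hsq := ((hasDerivAt_id' x).add_const s).fun_pow 2
  refine (((hasDerivAt_const x (c * s)).fun_div hsq (pow_ne_zero 2 hx)).congr_deriv ?_).deriv
  field_simp
  ring

theorem hasDerivAt_exp_mul_div_add_pow {τ : ℝ → ℝ} {τ' t : ℝ} (hτ : HasDerivAt τ τ' t)
    (ρ : ℝ) (hW : ρ + τ t ^ 3 ≠ 0) :
    HasDerivAt (fun t => 4 * exp (τ t) * ρ / (ρ + τ t ^ 3))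
      (4 * exp (τ t) * ρ * τ' * (ρ + τ t ^ 3 - 3 * τ t ^ 2) / (ρ + τ t ^ 3) ^ 2) t := by
  refine (((hτ.exp.const_mul 4).mul_const ρ).fun_div ((hτ.fun_pow 3).const_add ρ) hW)
    |>.congr_deriv ?_
  push_cast
  ring

theorem jaegerLuckhaus_operator_eq (e τ ℓ m ρ : ℝ) (hW : ρ + τ ^ 3 ≠ 0) :
    4 * e * ρ * (-ℓ) * (ρ + τ ^ 3 - 3 * τ ^ 2) / (ρ + τ ^ 3) ^ 2
      - 4 * ρ * (-2 * (4 * e) * τ ^ 3 / (ρ + τ ^ 3) ^ 3)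
      - 2 * (4 * e * τ ^ 3 / (ρ + τ ^ 3) ^ 2) * (4 * e * ρ / (ρ + τ ^ 3) - m * ρ / (2 * π))
    = 4 * e * ρ / (ρ + τ ^ 3) ^ 3 * (-ℓ * (ρ + τ ^ 3) ^ 2 + 3 * ℓ * τ ^ 2 * (ρ + τ ^ 3)
        + 8 * τ ^ 3 - 8 * e * τ ^ 3 + m * τ ^ 3 * (ρ + τ ^ 3) / π) := by
  have hπ := pi_ne_zero
  field_simp
  ring

theorem subsolution_bracket_nonpos {ε ℓ m τ W : ℝ} (hm : 0 ≤ m)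
    (h2 : (3 * ℓ + m * ε / π) ^ 2 ≤ 32 * ℓ) (hτ : 0 ≤ τ) (hτε : τ ≤ ε) (hW : 0 ≤ W) :
    -ℓ * W ^ 2 + 3 * ℓ * τ ^ 2 * W + 8 * τ ^ 3 - 8 * exp τ * τ ^ 3 + m * τ ^ 3 * W / π ≤ 0 := by
  have hexp : 8 * τ ^ 3 - 8 * exp τ * τ ^ 3 ≤ -8 * (τ ^ 2 * τ ^ 2) := by
    nlinarith [mul_le_mul_of_nonneg_right (add_one_le_exp τ) (pow_nonneg hτ 3)]
  have hdrift : m * τ ^ 3 * W / π ≤ m * ε / π * τ ^ 2 * W := by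
    rw [show m * τ ^ 3 * W / π = m * τ / π * τ ^ 2 * W by ring]
    gcongr
  have hquad := quadratic_form_nonpos_of_discrim_nonpos (b := 3 * ℓ + m * ε / π) (c := -ℓ)
    (by norm_num : (-8 : ℝ) < 0) (by rw [discrim]; linarith) (τ ^ 2) W
  linarith

theorem stmt_7_general (ε ℓ m : ℝ) (hℓ : ℓ ∈ Set.Ioo (0:ℝ) 1)
    (hm : 0 < m) (h2 : (3*ℓ + m*ε/π)^2 ≤ 32*ℓ) :
    let τ : ℝ → ℝ := fun t => ε - ℓ*t
    let a : ℝ → ℝ := fun t => 4 * Real.exp (τ t)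
    let u : ℝ → ℝ → ℝ := fun ρ t => a t * ρ / (ρ + (τ t)^3)
    ∀ ρ ∈ Set.Ioo (0:ℝ) 1, ∀ t ∈ Set.Ioo 0 (ε/ℓ),
      deriv (fun t' => u ρ t') t
        - 4*ρ * deriv (fun ρ' => deriv (fun ρ'' => u ρ'' t) ρ') ρ
        - 2 * deriv (fun ρ' => u ρ' t) ρ * (u ρ t - m*ρ/(2*π)) ≤ 0 := by
  intro τ a u ρ hρ t ht
  have hτ : 0 < ε - ℓ * t := by
    have := (lt_div_iff₀ hℓ.1).1 ht.2
    linarith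
  have hτε : ε - ℓ * t ≤ ε := sub_le_self _ (mul_nonneg hℓ.1.le ht.1.le)
  have hW : 0 < ρ + (ε - ℓ * t) ^ 3 := add_pos hρ.1 (pow_pos hτ 3)
  have hτ' : HasDerivAt (fun t => ε - ℓ * t) (-ℓ) t := by
    simpa using ((hasDerivAt_id t).const_mul ℓ).const_sub ε
  simp only [u, a, τ]
  rw [(hasDerivAt_exp_mul_div_add_pow hτ' ρ hW.ne').deriv,
    deriv_deriv_mul_div_add_const _ _ _ hW.ne',
    (hasDerivAt_mul_div_add_const _ _ _ hW.ne').deriv,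
    jaegerLuckhaus_operator_eq _ _ _ _ _ hW.ne']
  exact mul_nonpos_of_nonneg_of_nonpos (by have := hρ.1; positivity)
    (subsolution_bracket_nonpos hm.le h2 hτ.le hτε hW.le)

theorem stmt_7 (ε ℓ m : ℝ) (hε : ε ∈ Set.Ioo (0:ℝ) 1) (hℓ : ℓ ∈ Set.Ioo (0:ℝ) 1)
    (hm : 0 < m) (h2 : (3*ℓ + m*ε/π)^2 ≤ 32*ℓ) :
    let τ : ℝ → ℝ := fun t => ε - ℓ*t
    let a : ℝ → ℝ := fun t => 4 * Real.exp (τ t)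
    let u : ℝ → ℝ → ℝ := fun ρ t => a t * ρ / (ρ + (τ t)^3)
    ∀ ρ ∈ Set.Ioo (0:ℝ) 1, ∀ t ∈ Set.Ioo 0 (ε/ℓ),
      deriv (fun t' => u ρ t') t
        - 4*ρ * deriv (fun ρ' => deriv (fun ρ'' => u ρ'' t) ρ') ρ
        - 2 * deriv (fun ρ' => u ρ' t) ρ * (u ρ t - m*ρ/(2*π)) ≤ 0 :=
  stmt_7_general ε ℓ m hℓ hm h2
end

section
/- Let f ∈ C⁰([0,1]) ∩ C¹((0,1)) with f(0) = 0 and 0 < inf_{ξ∈(0,1)} f'(ξ) ≤ sup_{ξ∈(0,1)} f'(ξ) < ∞. Then there exists θ > 0 such that for all ϵ > 0 and all ξ ∈ (0,1): (1+θ)ξ/(θ+ξ) · (f(1)+ϵ) ≥ f(ξ). -/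
open Real

/-- if `f ∈ C⁰([0,1]) ∩ C¹((0,1))`, `f 0 = 0`, and
`0 < inf f' ≤ sup f' < ∞` on `(0,1)`, then there is `θ > 0` with
`(1+θ)ξ/(θ+ξ) · (f 1 + ϵ) ≥ f ξ` for all `ϵ > 0` and `ξ ∈ (0,1)`. -/
theorem stmt_9 (f : ℝ → ℝ) (hc : ContinuousOn f (Set.Icc 0 1))
    (hd : DifferentiableOn ℝ f (Set.Ioo 0 1))
    (hd1 : ContinuousOn (deriv f) (Set.Ioo 0 1))
    (h0 : f 0 = 0)
    (hinf : ∃ c > 0, ∀ ξ ∈ Set.Ioo (0:ℝ) 1, c ≤ deriv f ξ)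
    (hsup : ∃ C : ℝ, ∀ ξ ∈ Set.Ioo (0:ℝ) 1, deriv f ξ ≤ C) :
    ∃ θ > 0, ∀ ϵ > 0, ∀ ξ ∈ Set.Ioo (0:ℝ) 1,
      (1+θ)*ξ/(θ+ξ) * (f 1 + ϵ) ≥ f ξ := by
  obtain ⟨c, hc0, hcle⟩ := hinf
  obtain ⟨C0, hC0⟩ := hsup
  set C : ℝ := max C0 c with hCdef
  have hCge : ∀ ξ ∈ Set.Ioo (0:ℝ) 1, deriv f ξ ≤ C := fun ξ hξ =>
    (hC0 ξ hξ).trans (le_max_left _ _)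
  have hcC : c ≤ C := le_max_right _ _
  have hCpos : 0 < C := lt_of_lt_of_le hc0 hcC
  have hd' : DifferentiableOn ℝ f (interior (Set.Icc (0:ℝ) 1)) := by
    rwa [interior_Icc]
  have hlow : ∀ x ∈ Set.Icc (0:ℝ) 1, ∀ y ∈ Set.Icc (0:ℝ) 1, x ≤ y →
      c * (y - x) ≤ f y - f x := by
    apply (convex_Icc (0:ℝ) 1).mul_sub_le_image_sub_of_le_deriv hc hd'
    rw [interior_Icc]; exact hcle
  have hhigh : ∀ x ∈ Set.Icc (0:ℝ) 1, ∀ y ∈ Set.Icc (0:ℝ) 1, x ≤ y →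
      f y - f x ≤ C * (y - x) := by
    apply (convex_Icc (0:ℝ) 1).image_sub_le_mul_sub_of_deriv_le hc hd'
    rw [interior_Icc]; exact hCge
  have h0m : (0:ℝ) ∈ Set.Icc (0:ℝ) 1 := by norm_num
  have h1m : (1:ℝ) ∈ Set.Icc (0:ℝ) 1 := by norm_num
  have hf1 : c ≤ f 1 := by
    have := hlow 0 h0m 1 h1m (by norm_num)
    simpa [h0] using this
  refine ⟨c / (2 * C), by positivity, ?_⟩
  set θ : ℝ := c / (2 * C) with hθdef
  have hθpos : 0 < θ := by positivity
  have hθC : θ * (2 * C) = c := div_mul_cancel₀ _ (by positivity)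
  intro ε hε ξ hξ
  obtain ⟨hξ0, hξ1⟩ := hξ
  have hξm : ξ ∈ Set.Icc (0:ℝ) 1 := ⟨le_of_lt hξ0, le_of_lt hξ1⟩
  have hub : f ξ ≤ C * ξ := by
    have := hhigh 0 h0m ξ hξm (le_of_lt hξ0)
    simpa [h0] using this
  have hlb : c * (1 - ξ) ≤ f 1 - f ξ := hlow ξ hξm 1 h1m (le_of_lt hξ1)
  have hden : 0 < θ + ξ := by positivity
  have key : f ξ * (θ + ξ) ≤ (1 + θ) * ξ * f 1 := by
    by_cases h : f 1 * θ ≤ c * ξ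
    · have h1 : f ξ ≤ f 1 - c * (1 - ξ) := by linarith
      nlinarith [mul_nonneg (sub_nonneg.2 hξ1.le) (by linarith [mul_nonneg hc0.le hθpos.le] :
        (0:ℝ) ≤ c * (θ + ξ) - f 1 * θ), mul_le_mul_of_nonneg_right h1 hden.le]
    · push_neg at h
      have hCθξ : C * (θ + ξ) ≤ (1 + θ) * f 1 := by
        have h2 : C * (θ + ξ) * (2 * c) ≤ (1 + θ) * f 1 * (2 * c) := by
          nlinarith [mul_lt_mul_of_pos_left h hCpos, mul_nonneg hθpos.le
            (sub_nonneg.2 hf1), mul_le_mul_of_nonneg_left hf1 hc0.le]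
        exact le_of_mul_le_mul_right h2 (by positivity)
      nlinarith [mul_le_mul_of_nonneg_right hub hden.le,
        mul_le_mul_of_nonneg_left hCθξ hξ0.le]
  have hcoef : 0 ≤ (1 + θ) * ξ / (θ + ξ) := by positivity
  have : (1 + θ) * ξ / (θ + ξ) * f 1 ≥ f ξ := by
    rw [ge_iff_le, div_mul_eq_mul_div, le_div_iff₀ hden]
    linarith
  have : (1 + θ) * ξ / (θ + ξ) * f 1 ≤ (1 + θ) * ξ / (θ + ξ) * (f 1 + ε) := by
    apply mul_le_mul_of_nonneg_left (by linarith) hcoef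
  linarith
end

section
/- Let f ∈ C⁰([0,1]) be nonnegative and increasing with sup_{ξ∈(0,1)} f(ξ)/ξ < ∞. Then for every ϵ > 0 there exists θ > 0 such that (1+θ)ξ/(θ+ξ) · (f(1)+ϵ) ≥ f(ξ) for all ξ ∈ (0,1). -/
open Real

theorem stmt_10 (f : ℝ → ℝ) (hc : ContinuousOn f (Set.Icc 0 1))
    (hnonneg : ∀ ξ ∈ Set.Icc (0:ℝ) 1, 0 ≤ f ξ)
    (hmono : MonotoneOn f (Set.Icc 0 1))
    (hbdd : ∃ C : ℝ, ∀ ξ ∈ Set.Ioo (0:ℝ) 1, f ξ / ξ ≤ C) :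
    ∀ ϵ > 0, ∃ θ > 0, ∀ ξ ∈ Set.Ioo (0:ℝ) 1,
      (1+θ)*ξ/(θ+ξ) * (f 1 + ϵ) ≥ f ξ := by
  obtain ⟨C, hC⟩ := hbdd
  intro ϵ hϵ
  have hf1 : 0 ≤ f 1 := hnonneg 1 (by norm_num)
  set C' := max C 1 with hC'def
  have hC'pos : (0:ℝ) < C' := lt_of_lt_of_le one_pos (le_max_right _ _)
  have hfe : 0 < f 1 + ϵ := by linarith
  set δ := (f 1 + ϵ) / (2 * C') with hδdef
  have hδpos : 0 < δ := by positivity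
  refine ⟨min δ (ϵ * δ / (f 1 + 1)), by positivity, ?_⟩
  intro ξ hξ
  obtain ⟨hξ0, hξ1⟩ := hξ
  set θ := min δ (ϵ * δ / (f 1 + 1)) with hθdef
  have hθpos : 0 < θ := by positivity
  have hθδ : θ ≤ δ := min_le_left _ _
  have hθε : θ * (f 1 + 1) ≤ ϵ * δ := by
    have h1 : θ ≤ ϵ * δ / (f 1 + 1) := min_le_right _ _
    have h2 : (0:ℝ) < f 1 + 1 := by linarith
    calc θ * (f 1 + 1) ≤ (ϵ * δ / (f 1 + 1)) * (f 1 + 1) := by nlinarith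
      _ = ϵ * δ := by field_simp
  have hden : 0 < θ + ξ := by linarith
  rw [ge_iff_le, div_mul_eq_mul_div, le_div_iff₀ hden]
  rcases lt_or_ge ξ δ with h | h
  · have hfC : f ξ ≤ C' * ξ := by
      have h1 := hC ξ ⟨hξ0, hξ1⟩
      have h2 : f ξ ≤ C * ξ := by
        rw [div_le_iff₀ hξ0] at h1; linarith
      nlinarith [le_max_left C 1]
    have hδC : 2 * C' * δ = f 1 + ϵ := by
      rw [hδdef]; field_simp
    nlinarith [mul_le_mul_of_nonneg_right hfC (le_of_lt hden),
      mul_nonneg (mul_nonneg (le_of_lt hC'pos) (le_of_lt hξ0)) (by linarith : (0:ℝ) ≤ 2*δ - (θ+ξ)),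
      mul_nonneg (mul_nonneg (le_of_lt hθpos) (le_of_lt hξ0)) (le_of_lt hfe)]
  · have hfξ : f ξ ≤ f 1 := hmono ⟨le_of_lt hξ0, le_of_lt hξ1⟩ (by norm_num) (le_of_lt hξ1)
    have h1 : f ξ * (θ + ξ) ≤ f 1 * (θ + ξ) :=
      mul_le_mul_of_nonneg_right hfξ (le_of_lt hden)
    have h2 : f 1 * θ ≤ ϵ * ξ := by nlinarith
    nlinarith [mul_nonneg (mul_nonneg (le_of_lt hθpos) (le_of_lt hξ0)) (le_of_lt hfe)]
end

section
/- Fix constants ε, ℓ, γ, δ, μ* > 0 with ℓ ≥ δ and 2γ² ≥ 3ℓ. Define τ(t) = ε − ℓt, a(t) = 2⁵e^{(γ+1)τ}, b(t) = 8e^{τ}, u̲(s,t) = a(s^{3/2} + 3τ³s)/(s^{1/2}+τ³)³ and w̲(s,t) = bs/(s^{1/2}+τ³). Then for all s ∈ (0,1) and t ∈ (0,ε/ℓ): w̲_t − 16 s^{3/2} w̲_{ss} + δ w̲ − u̲ ≤ 0. -/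
open Real

/-!
Write `s = r²` and `T = τ(t)`. Computing the derivatives, the left-hand side equals
`8 e^T r² / (r + T³)³` times
`ℓ (3T² - (r + T³)) (r + T³) + 4 (r + 3T³) + δ (r + T³)² - 4 e^{γT} (r + 3T³)`.
Since `δ ≤ ℓ`, the first and third terms together are at most `3ℓT² (r + T³)`, and
`e^{γT} - 1 ≥ γ²T²/2` together with `3ℓ ≤ 2γ²` lets the last term absorb this and `4 (r + 3T³)`.
-/

lemma hasDerivAt_mul_div_sqrt_add (k c : ℝ) {x : ℝ} (hx : 0 < x) (hc : √x + c ≠ 0) :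
    HasDerivAt (fun y => k * y / (√y + c)) (k * (√x / 2 + c) / (√x + c) ^ 2) x := by
  have hsqrt := (hasDerivAt_sqrt hx.ne').add_const c
  refine (((hasDerivAt_id' x).const_mul k).div hsqrt hc).congr_deriv ?_
  have : √x ≠ 0 := (sqrt_pos.mpr hx).ne'
  field_simp
  linear_combination k * sq_sqrt hx.le

lemma hasDerivAt_mul_sqrt_half_add_div_sq (k c : ℝ) {x : ℝ} (hx : 0 < x) (hc : √x + c ≠ 0) :
    HasDerivAt (fun y => k * (√y / 2 + c) / (√y + c) ^ 2)
      (-(k * (√x + 3 * c)) / (4 * √x * (√x + c) ^ 3)) x := by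
  have hsqrt := hasDerivAt_sqrt hx.ne'
  refine ((((hsqrt.div_const 2).add_const c).const_mul k).div ((hsqrt.add_const c).pow 2)
    (pow_ne_zero 2 hc)).congr_deriv ?_
  simp only [Pi.pow_apply]
  have : √x ≠ 0 := (sqrt_pos.mpr hx).ne'
  field_simp
  ring

lemma deriv_deriv_mul_div_sqrt_add (k : ℝ) {c x : ℝ} (hx : 0 < x) (hc : 0 ≤ c) :
    deriv (fun y => deriv (fun z => k * z / (√z + c)) y) x
      = -(k * (√x + 3 * c)) / (4 * √x * (√x + c) ^ 3) := by
  have hpos : ∀ y, 0 < y → √y + c ≠ 0 := fun y hy => by positivity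
  have hderiv : (fun y => deriv (fun z => k * z / (√z + c)) y)
      =ᶠ[nhds x] fun y => k * (√y / 2 + c) / (√y + c) ^ 2 := by
    filter_upwards [Ioi_mem_nhds hx] with y hy
    exact (hasDerivAt_mul_div_sqrt_add k c hy (hpos y hy)).deriv
  rw [hderiv.deriv_eq]
  exact (hasDerivAt_mul_sqrt_half_add_div_sq k c hx (hpos x hx)).deriv

lemma HasDerivAt.mul_exp_mul_div_add_pow_three {f : ℝ → ℝ} {f' t : ℝ} (k m r : ℝ)
    (hf : HasDerivAt f f' t) (hr : r + f t ^ 3 ≠ 0) :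
    HasDerivAt (fun t => k * Real.exp (f t) * m / (r + f t ^ 3))
      (k * m * Real.exp (f t) * f' * (r + f t ^ 3 - 3 * f t ^ 2) / (r + f t ^ 3) ^ 2) t := by
  refine (((hf.exp.const_mul k).mul_const m).div ((hf.pow 3).const_add r) hr).congr_deriv ?_
  simp only [Pi.pow_apply]
  push_cast
  ring

lemma cubic_barrier_le_four_mul_exp {ℓ γ δ T r : ℝ} (hγ : 0 < γ) (hγℓ : 3 * ℓ ≤ 2 * γ ^ 2)
    (hδℓ : δ ≤ ℓ) (hT : 0 < T) (hr : 0 < r) :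
    ℓ * (3 * T ^ 2 - (r + T ^ 3)) * (r + T ^ 3) + 4 * (r + 3 * T ^ 3) + δ * (r + T ^ 3) ^ 2
      ≤ 4 * exp (γ * T) * (r + 3 * T ^ 3) := by
  have hexp := quadratic_le_exp_of_nonneg (mul_pos hγ hT).le
  have hδ : δ * (r + T ^ 3) ^ 2 ≤ ℓ * (r + T ^ 3) ^ 2 := by gcongr
  have hcube : r + T ^ 3 ≤ r + 3 * T ^ 3 := by nlinarith [pow_pos hT 3]
  calc ℓ * (3 * T ^ 2 - (r + T ^ 3)) * (r + T ^ 3) + 4 * (r + 3 * T ^ 3) + δ * (r + T ^ 3) ^ 2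
      ≤ 3 * ℓ * T ^ 2 * (r + T ^ 3) + 4 * (r + 3 * T ^ 3) := by nlinarith
    _ ≤ 2 * γ ^ 2 * T ^ 2 * (r + T ^ 3) + 4 * (r + 3 * T ^ 3) := by gcongr
    _ ≤ 2 * γ ^ 2 * T ^ 2 * (r + 3 * T ^ 3) + 4 * (r + 3 * T ^ 3) := by gcongr
    _ ≤ 4 * exp (γ * T) * (r + 3 * T ^ 3) := by nlinarith [mul_pos hγ hT]

theorem stmt_13_general (ε ℓ γ δ : ℝ) (hℓ : 0 < ℓ) (hγ : 0 < γ)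
    (hℓδ : ℓ ≥ δ) (hγℓ : 2*γ^2 ≥ 3*ℓ) :
    let τ : ℝ → ℝ := fun t => ε - ℓ*t
    let a : ℝ → ℝ := fun t => 2^5 * Real.exp ((γ+1) * τ t)
    let b : ℝ → ℝ := fun t => 8 * Real.exp (τ t)
    let u : ℝ → ℝ → ℝ := fun s t =>
      a t * (s ^ ((3:ℝ)/2) + 3*(τ t)^3*s) / (s ^ ((1:ℝ)/2) + (τ t)^3)^3
    let w : ℝ → ℝ → ℝ := fun s t => b t * s / (s ^ ((1:ℝ)/2) + (τ t)^3)
    ∀ s ∈ Set.Ioo (0:ℝ) 1, ∀ t ∈ Set.Ioo 0 (ε/ℓ),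
      deriv (fun t' => w s t') t
        - 16 * s ^ ((3:ℝ)/2) * deriv (fun s' => deriv (fun s'' => w s'' t) s') s
        + δ * w s t - u s t ≤ 0 := by
  intro τ a b u w s hs t ht
  obtain ⟨r, hr, rfl⟩ : ∃ r, 0 < r ∧ s = r ^ 2 := ⟨√s, sqrt_pos.2 hs.1, (sq_sqrt hs.1.le).symm⟩
  have hT : 0 < τ t := sub_pos.2 (by linarith [(lt_div_iff₀ hℓ).mp ht.2])
  have hsqrt : (r ^ 2) ^ ((1:ℝ)/2) = r := by rw [← sqrt_eq_rpow, sqrt_sq hr.le]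
  have hpow : (r ^ 2) ^ ((3:ℝ)/2) = r ^ 3 := by
    rw [← rpow_natCast, ← rpow_mul hr.le]; norm_num
  have hw_t : deriv (fun t' => w (r ^ 2) t') t
      = 8 * r ^ 2 * exp (τ t) * -ℓ * (r + τ t ^ 3 - 3 * τ t ^ 2) / (r + τ t ^ 3) ^ 2 := by
    have hτ : HasDerivAt τ (-ℓ) t := by
      simpa using ((hasDerivAt_id t).const_mul ℓ).const_sub ε
    simp only [w, b, hsqrt]
    exact (hτ.mul_exp_mul_div_add_pow_three 8 (r ^ 2) r (by positivity)).deriv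
  have hw_ss : deriv (fun s' => deriv (fun s'' => w s'' t) s') (r ^ 2)
      = -(8 * exp (τ t) * (r + 3 * τ t ^ 3)) / (4 * r * (r + τ t ^ 3) ^ 3) := by
    simp only [w, b, ← sqrt_eq_rpow]
    rw [deriv_deriv_mul_div_sqrt_add _ (by positivity) (by positivity), sqrt_sq hr.le]
  have hbarrier := cubic_barrier_le_four_mul_exp hγ hγℓ hℓδ hT hr
  rw [hw_t, hw_ss]
  simp only [u, a, w, b, hsqrt, hpow, add_mul, one_mul, exp_add]
  calc _ = 8 * exp (τ t) * r ^ 2 / (r + τ t ^ 3) ^ 3 *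
        (ℓ * (3 * τ t ^ 2 - (r + τ t ^ 3)) * (r + τ t ^ 3) + 4 * (r + 3 * τ t ^ 3)
          + δ * (r + τ t ^ 3) ^ 2 - 4 * exp (γ * τ t) * (r + 3 * τ t ^ 3)) := by
        field_simp
        ring
    _ ≤ 0 := mul_nonpos_of_nonneg_of_nonpos (by positivity) (by linarith)

theorem stmt_13 (ε ℓ γ δ μs : ℝ) (hε : 0 < ε) (hℓ : 0 < ℓ) (hγ : 0 < γ)
    (hδ : 0 < δ) (hμ : 0 < μs) (hℓδ : ℓ ≥ δ) (hγℓ : 2*γ^2 ≥ 3*ℓ) :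
    let τ : ℝ → ℝ := fun t => ε - ℓ*t
    let a : ℝ → ℝ := fun t => 2^5 * Real.exp ((γ+1) * τ t)
    let b : ℝ → ℝ := fun t => 8 * Real.exp (τ t)
    let u : ℝ → ℝ → ℝ := fun s t =>
      a t * (s ^ ((3:ℝ)/2) + 3*(τ t)^3*s) / (s ^ ((1:ℝ)/2) + (τ t)^3)^3
    let w : ℝ → ℝ → ℝ := fun s t => b t * s / (s ^ ((1:ℝ)/2) + (τ t)^3)
    ∀ s ∈ Set.Ioo (0:ℝ) 1, ∀ t ∈ Set.Ioo 0 (ε/ℓ),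
      deriv (fun t' => w s t') t
        - 16 * s ^ ((3:ℝ)/2) * deriv (fun s' => deriv (fun s'' => w s'' t) s') s
        + δ * w s t - u s t ≤ 0 :=
  stmt_13_general ε ℓ γ δ hℓ hγ hℓδ hγℓ
end

section
/- Fix ε, ℓ, γ, μ* > 0 such that −2⁵ξ² + (μ*ε + 6ℓ)ξ − (γ+1)ℓ ≤ 0 for all ξ ∈ ℝ. With τ(t) = ε−ℓt, a(t) = 2⁵e^{(γ+1)τ}, b(t) = 8e^{τ}, u̲(s,t) = a(s^{3/2}+3τ³s)/(s^{1/2}+τ³)³ and w̲(s,t) = bs/(s^{1/2}+τ³), one has u̲_t − 16s^{3/2}u̲_{ss} − 4u̲_s(w̲ − μ*s/4) ≤ 0 for all s ∈ (0,1), t ∈ (0,ε/ℓ). -/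
open Real Filter Topology

/-!
Write σ = √s, T = τ(t) and c = T³. Then u̲ = a·P_c(s) with the profile
P_c(s) = (s^{3/2} + 3cs)/(√s + c)³, whose derivatives are ∂ₛP_c = 3c²/(σ + c)⁴,
∂ₛ²P_c = -6c²/(σ(σ + c)⁵) and ∂_c P_c = -6cs/(σ + c)⁴. Multiplying the operator by
(σ + T³)⁵/(a s) leaves a polynomial in σ, T and e^T, which is nonpositive by e^T ≥ 1 + T,
T ≤ ε, and the quadratic assumption at ξ = T²/(σ + T³).
-/

noncomputable def profile (c s : ℝ) : ℝ :=
  (s ^ ((3:ℝ)/2) + 3*c*s) / (s ^ ((1:ℝ)/2) + c)^3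

lemma rpow_three_halves {x : ℝ} (hx : 0 ≤ x) : x ^ ((3:ℝ)/2) = x * x ^ ((1:ℝ)/2) := by
  rw [show (3:ℝ)/2 = 1 + 1/2 by norm_num, rpow_add' hx (by norm_num), rpow_one]

lemma rpow_half_sq {x : ℝ} (hx : 0 ≤ x) : (x ^ ((1:ℝ)/2)) ^ 2 = x := by
  rw [← sqrt_eq_rpow, sq_sqrt hx]

lemma hasDerivAt_rpow_half {x : ℝ} (hx : 0 < x) :
    HasDerivAt (fun s : ℝ => s ^ ((1:ℝ)/2)) (1 / (2 * x ^ ((1:ℝ)/2))) x := by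
  simpa only [← sqrt_eq_rpow] using hasDerivAt_sqrt hx.ne'

lemma hasDerivAt_rpow_three_halves {x : ℝ} (hx : 0 < x) :
    HasDerivAt (fun s : ℝ => s ^ ((3:ℝ)/2)) (3/2 * x ^ ((1:ℝ)/2)) x := by
  convert hasDerivAt_rpow_const (p := (3:ℝ)/2) (Or.inl hx.ne') using 3
  norm_num

lemma hasDerivAt_profile_param {c x : ℝ} (hc : 0 ≤ c) (hx : 0 < x) :
    HasDerivAt (fun c => profile c x) (-6*c*x / (x ^ ((1:ℝ)/2) + c)^4) c := by
  have hN : HasDerivAt (fun c => x ^ ((3:ℝ)/2) + 3*c*x) (3*x) c := by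
    simpa using ((hasDerivAt_id' c).const_mul 3 |>.mul_const x).const_add (x ^ ((3:ℝ)/2))
  refine (hN.fun_div ((hasDerivAt_id' c).const_add (x ^ ((1:ℝ)/2)) |>.fun_pow 3)
    (by positivity)).congr_deriv ?_
  rw [rpow_three_halves hx.le]
  field_simp
  ring

lemma HasDerivAt.profile_param {f : ℝ → ℝ} {f' t x : ℝ} (hf : HasDerivAt f f' t)
    (hf0 : 0 ≤ f t) (hx : 0 < x) :
    HasDerivAt (fun t => profile (f t) x) (-6 * f t * x / (x ^ ((1:ℝ)/2) + f t)^4 * f') t :=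
  (hasDerivAt_profile_param hf0 hx).comp t hf

lemma hasDerivAt_profile {c x : ℝ} (hc : 0 ≤ c) (hx : 0 < x) :
    HasDerivAt (profile c) (3*c^2 / (x ^ ((1:ℝ)/2) + c)^4) x := by
  have hσ : 0 < x ^ ((1:ℝ)/2) := rpow_pos_of_pos hx _
  have hN : HasDerivAt (fun s => s ^ ((3:ℝ)/2) + 3*c*s) (3/2 * x ^ ((1:ℝ)/2) + 3*c) x := by
    simpa using (hasDerivAt_rpow_three_halves hx).fun_add ((hasDerivAt_id' x).const_mul (3*c))
  refine (hN.fun_div ((hasDerivAt_rpow_half hx).add_const c |>.fun_pow 3)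
    (by positivity)).congr_deriv ?_
  rw [rpow_three_halves hx.le]
  set σ := x ^ ((1:ℝ)/2)
  rw [← rpow_half_sq hx.le]
  field_simp
  ring

lemma hasDerivAt_deriv_profile {c x : ℝ} (hc : 0 ≤ c) (hx : 0 < x) :
    HasDerivAt (deriv (profile c)) (-6*c^2 / (x ^ ((1:ℝ)/2) * (x ^ ((1:ℝ)/2) + c)^5)) x := by
  have hderiv : deriv (profile c) =ᶠ[𝓝 x] fun s => 3*c^2 / (s ^ ((1:ℝ)/2) + c)^4 := by
    filter_upwards [eventually_gt_nhds hx] with s hs using (hasDerivAt_profile hc hs).deriv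
  refine (((hasDerivAt_const x (3*c^2)).fun_div ((hasDerivAt_rpow_half hx).add_const c |>.fun_pow 4)
    (by positivity)).congr_of_eventuallyEq hderiv).congr_deriv ?_
  field_simp
  ring

lemma subsolution_numerator_nonpos {ε ℓ γ μ σ T E : ℝ} (hμ : 0 ≤ μ) (hσ : 0 ≤ σ) (hT : 0 < T)
    (hTε : T ≤ ε) (hE : 1 + T ≤ E)
    (hquad : ∀ ξ : ℝ, -2^5*ξ^2 + (μ*ε + 6*ℓ)*ξ - (γ+1)*ℓ ≤ 0) :
    -ℓ*(γ+1)*(σ + 3*T^3)*(σ + T^3)^2 + 18*ℓ*T^5*(σ + T^3) + 96*T^6*(1 - E)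
      + 3*μ*T^6*(σ + T^3) ≤ 0 := by
  have hℓγ : 0 ≤ (γ+1)*ℓ := by linarith [hquad 0]
  have hq : -32*T^4 + (μ*ε + 6*ℓ)*T^2*(σ + T^3) - (γ+1)*ℓ*(σ + T^3)^2 ≤ 0 := by
    calc _ = (-2^5*(T^2/(σ + T^3))^2 + (μ*ε + 6*ℓ)*(T^2/(σ + T^3)) - (γ+1)*ℓ) * (σ + T^3)^2 := by
          field_simp
          ring
      _ ≤ 0 := mul_nonpos_of_nonpos_of_nonneg (hquad _) (sq_nonneg _)
  have hμT : μ*T^6*(σ + T^3) ≤ μ*ε*T^5*(σ + T^3) := by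
    have := mul_le_mul_of_nonneg_left hTε (by positivity : 0 ≤ μ*T^5*(σ + T^3))
    linarith
  have hET : T^6*(1 - E) ≤ -T^7 := by nlinarith [pow_pos hT 6]
  nlinarith [mul_nonpos_of_nonpos_of_nonneg hq (by positivity : 0 ≤ 3*T^3),
    mul_nonneg (mul_nonneg hℓγ hσ) (sq_nonneg (σ + T^3))]

lemma subsolution_combination_nonpos {ε ℓ γ μ A E T s σ : ℝ} (hμ : 0 ≤ μ) (hA : 0 ≤ A)
    (hs : 0 ≤ s) (hσ : 0 < σ) (hT : 0 < T) (hTε : T ≤ ε) (hE : 1 + T ≤ E)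
    (hquad : ∀ ξ : ℝ, -2^5*ξ^2 + (μ*ε + 6*ℓ)*ξ - (γ+1)*ℓ ≤ 0) :
    A*((γ+1)*-ℓ)*((s*σ + 3*T^3*s)/(σ + T^3)^3) + A*(-6*T^3*s/(σ + T^3)^4*(3*T^2*-ℓ))
      - 16*(s*σ)*(A*(-6*(T^3)^2/(σ*(σ + T^3)^5)))
      - 4*(A*(3*(T^3)^2/(σ + T^3)^4))*(8*E*s/(σ + T^3) - μ*s/4) ≤ 0 := by
  calc _ = A*s*(-ℓ*(γ+1)*(σ + 3*T^3)*(σ + T^3)^2 + 18*ℓ*T^5*(σ + T^3) + 96*T^6*(1 - E)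
            + 3*μ*T^6*(σ + T^3)) / (σ + T^3)^5 := by
        field_simp
        ring
    _ ≤ 0 := div_nonpos_of_nonpos_of_nonneg (mul_nonpos_of_nonneg_of_nonpos (by positivity)
        (subsolution_numerator_nonpos hμ hσ.le hT hTε hE hquad)) (by positivity)

theorem stmt_14_general (ε ℓ γ μs : ℝ) (hℓ : 0 < ℓ) (hμ : 0 < μs)
    (hquad : ∀ ξ : ℝ, -2^5*ξ^2 + (μs*ε + 6*ℓ)*ξ - (γ+1)*ℓ ≤ 0) :
    let τ : ℝ → ℝ := fun t => ε - ℓ*t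
    let a : ℝ → ℝ := fun t => 2^5 * Real.exp ((γ+1) * τ t)
    let b : ℝ → ℝ := fun t => 8 * Real.exp (τ t)
    let u : ℝ → ℝ → ℝ := fun s t =>
      a t * (s ^ ((3:ℝ)/2) + 3*(τ t)^3*s) / (s ^ ((1:ℝ)/2) + (τ t)^3)^3
    let w : ℝ → ℝ → ℝ := fun s t => b t * s / (s ^ ((1:ℝ)/2) + (τ t)^3)
    ∀ s ∈ Set.Ioo (0:ℝ) 1, ∀ t ∈ Set.Ioo 0 (ε/ℓ),
      deriv (fun t' => u s t') t
        - 16 * s ^ ((3:ℝ)/2) * deriv (fun s' => deriv (fun s'' => u s'' t) s') s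
        - 4 * deriv (fun s' => u s' t) s * (w s t - μs*s/4) ≤ 0 := by
  intro τ a b u w s ⟨hs, _⟩ t ⟨ht, htε⟩
  have hu : ∀ s t, u s t = a t * profile (τ t ^ 3) s := fun s t => mul_div_assoc _ _ _
  have hτ : 0 < τ t := sub_pos.mpr (by rw [mul_comm]; exact (lt_div_iff₀ hℓ).mp htε)
  have hτε : τ t ≤ ε := sub_le_self ε (mul_pos hℓ ht).le
  have hτ' : HasDerivAt τ (-ℓ) t := by
    simpa using ((hasDerivAt_id' t).const_mul ℓ).const_sub ε
  have ha : HasDerivAt a (a t * ((γ+1) * -ℓ)) t :=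
    (hτ'.const_mul (γ+1)).exp.const_mul _ |>.congr_deriv (by ring)
  have hτ3 : HasDerivAt (fun t' => τ t' ^ 3) (3 * τ t ^ 2 * -ℓ) t :=
    (hτ'.fun_pow 3).congr_deriv (by norm_num)
  have hut := ha.fun_mul (hτ3.profile_param (pow_pos hτ 3).le hs)
  simp only [hu, deriv_const_mul_field']
  rw [hut.deriv, (hasDerivAt_deriv_profile (pow_pos hτ 3).le hs).deriv,
    (hasDerivAt_profile (pow_pos hτ 3).le hs).deriv]
  simp only [profile, w, b]
  rw [rpow_three_halves hs.le]
  exact subsolution_combination_nonpos hμ.le (by positivity) hs.le (rpow_pos_of_pos hs _) hτ hτε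
    (by linarith [add_one_le_exp (τ t)]) hquad

theorem stmt_14 (ε ℓ γ μs : ℝ) (hε : 0 < ε) (hℓ : 0 < ℓ) (hγ : 0 < γ) (hμ : 0 < μs)
    (hquad : ∀ ξ : ℝ, -2^5*ξ^2 + (μs*ε + 6*ℓ)*ξ - (γ+1)*ℓ ≤ 0) :
    let τ : ℝ → ℝ := fun t => ε - ℓ*t
    let a : ℝ → ℝ := fun t => 2^5 * Real.exp ((γ+1) * τ t)
    let b : ℝ → ℝ := fun t => 8 * Real.exp (τ t)
    let u : ℝ → ℝ → ℝ := fun s t =>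
      a t * (s ^ ((3:ℝ)/2) + 3*(τ t)^3*s) / (s ^ ((1:ℝ)/2) + (τ t)^3)^3
    let w : ℝ → ℝ → ℝ := fun s t => b t * s / (s ^ ((1:ℝ)/2) + (τ t)^3)
    ∀ s ∈ Set.Ioo (0:ℝ) 1, ∀ t ∈ Set.Ioo 0 (ε/ℓ),
      deriv (fun t' => u s t') t
        - 16 * s ^ ((3:ℝ)/2) * deriv (fun s' => deriv (fun s'' => u s'' t) s') s
        - 4 * deriv (fun s' => u s' t) s * (w s t - μs*s/4) ≤ 0 :=
  stmt_14_general ε ℓ γ μs hℓ hμ hquad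
end
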